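/- arXiv:1907.10286 — 3 statements merged into one kernel-verified Lean document; each statement's English description precedes it below -/
import Mathlib

section
/- Let X be a compact Hausdorff space and let μ, ν be nonzero regular (complex or signed) Borel measures on X such that for every pair K₁, K₂ of disjoint closed subsets of X we have |μ|(K₁) · |ν|(K₂) = 0. Then there exists a point x ∈ X such that the support of μ and the support of ν both equal {x}. -/
open MeasureTheory

-- Auxiliary: the "support set" of a nonzero signed measure on a compact space is nonempty.
lemma aux_nonempty {X : Type*} [TopologicalSpace X] [CompactSpace X]
    [MeasurableSpace X] (μ : SignedMeasure X) (hμ : μ ≠ 0) :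
    {y : X | ∀ U : Set X, IsOpen U → y ∈ U → 0 < μ.totalVariation U}.Nonempty := by
  by_contra h
  rw [Set.not_nonempty_iff_eq_empty, Set.eq_empty_iff_forall_notMem] at h
  -- every point has an open neighborhood of total variation zero
  have hcov : ∀ y : X, ∃ U : Set X, IsOpen U ∧ y ∈ U ∧ μ.totalVariation U = 0 := by
    intro y
    have := h y
    simp only [Set.mem_setOf_eq, not_forall] at this
    obtain ⟨U, hU, hyU, hpos⟩ := this
    exact ⟨U, hU, hyU, by simpa using hpos⟩
  choose U hUopen hyU hU0 using hcov
  obtain ⟨t, ht⟩ := isCompact_univ.elim_finite_subcover U hUopen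
    (fun x _ => Set.mem_iUnion.mpr ⟨x, hyU x⟩)
  have huniv : μ.totalVariation Set.univ = 0 := by
    refine le_antisymm ?_ zero_le
    calc μ.totalVariation Set.univ ≤ μ.totalVariation (⋃ i ∈ t, U i) := measure_mono ht
      _ ≤ ∑ i ∈ t, μ.totalVariation (U i) := measure_biUnion_finset_le t U
      _ = 0 := by simp [hU0]
  apply hμ
  ext i hi
  have : μ.totalVariation i = 0 :=
    le_antisymm (le_trans (measure_mono (Set.subset_univ i)) huniv.le) zero_le
  simpa using μ.null_of_totalVariation_zero this

theorem support_singleton_of_jointly_separating_measures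
    {X : Type*} [TopologicalSpace X] [CompactSpace X] [T2Space X]
    [MeasurableSpace X] [BorelSpace X]
    (μ ν : SignedMeasure X) (hμ : μ ≠ 0) (hν : ν ≠ 0)
    (hμreg : μ.totalVariation.Regular) (hνreg : ν.totalVariation.Regular)
    (hsep : ∀ K₁ K₂ : Set X, IsClosed K₁ → IsClosed K₂ → Disjoint K₁ K₂ →
      μ.totalVariation K₁ * ν.totalVariation K₂ = 0) :
    ∃ x : X,
      {y : X | ∀ U : Set X, IsOpen U → y ∈ U → 0 < μ.totalVariation U} = {x} ∧
      {y : X | ∀ U : Set X, IsOpen U → y ∈ U → 0 < ν.totalVariation U} = {x} := by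
  set Sμ := {y : X | ∀ U : Set X, IsOpen U → y ∈ U → 0 < μ.totalVariation U} with hSμ
  set Sν := {y : X | ∀ U : Set X, IsOpen U → y ∈ U → 0 < ν.totalVariation U} with hSν
  obtain ⟨x, hx⟩ := aux_nonempty μ hμ
  obtain ⟨z, hz⟩ := aux_nonempty ν hν
  -- any point of Sμ equals any point of Sν
  have key : ∀ a ∈ Sμ, ∀ b ∈ Sν, a = b := by
    intro a ha b hb
    by_contra hab
    obtain ⟨U, V, hUo, hVo, haU, hbV, hUV⟩ := t2_separation hab
    have hU : 0 < μ.totalVariation U := ha U hUo haU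
    have hV : 0 < ν.totalVariation V := hb V hVo hbV
    obtain ⟨K₁, hK₁U, hK₁c, hK₁⟩ := hμreg.innerRegular hUo 0 hU
    obtain ⟨K₂, hK₂V, hK₂c, hK₂⟩ := hνreg.innerRegular hVo 0 hV
    have := hsep K₁ K₂ hK₁c.isClosed hK₂c.isClosed
      (hUV.mono hK₁U hK₂V)
    rw [mul_eq_zero] at this
    rcases this with h | h
    · exact absurd h hK₁.ne'
    · exact absurd h hK₂.ne'
  have hxz : x = z := key x hx z hz
  refine ⟨x, ?_, ?_⟩
  · apply Set.eq_singleton_iff_unique_mem.mpr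
    exact ⟨hx, fun y hy => key y hy z hz ▸ hxz.symm ▸ rfl⟩
  · apply Set.eq_singleton_iff_unique_mem.mpr
    exact ⟨hxz ▸ hz, fun y hy => (key x hx y hy).symm⟩
end

section
/- Let X be a compact Hausdorff space and let φ₁, φ₂ : C(X, ℝ) → ℝ be nonzero continuous linear functionals such that for all f, g ∈ C(X, ℝ), f·g = 0 implies φ₁(f)·φ₂(g) = 0. Then there exists a point x ∈ X such that φ₁ = φ₁(1)·δₓ and φ₂ = φ₂(1)·δₓ, where δₓ(f) = f(x). -/
/-!
Call `y` a support point of a functional `φ` on `C(X, ℝ)` if every neighbourhood of `y` carries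
the support of some `f` with `φ f ≠ 0`. A partition of unity shows that `φ` kills every function
whose support avoids the support points, so a nonzero `φ` has one. Two support points of `φ₁` and
`φ₂` at distinct points would give `f * g = 0` with `φ₁ f * φ₂ g ≠ 0`; hence both functionals have
the same single support point `x`. If `g x = 0`, then `g` is a uniform limit of functions supported
in `{ε ≤ |g|}`, which `φ` kills, so by continuity `φ g = 0`, i.e. `φ` is a multiple of `δₓ`.
-/

open Set Topology

section FunctionalSupport

variable {X : Type*} [TopologicalSpace X]

def functionalSupport (φ : C(X, ℝ) → ℝ) : Set X :=
  {x | ∀ U ∈ 𝓝 x, ∃ f : C(X, ℝ), tsupport f ⊆ U ∧ φ f ≠ 0}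

theorem notMem_functionalSupport {φ : C(X, ℝ) → ℝ} {x : X} :
    x ∉ functionalSupport φ ↔ ∃ U ∈ 𝓝 x, ∀ f : C(X, ℝ), tsupport f ⊆ U → φ f = 0 := by
  simp [functionalSupport]

theorem eq_of_mem_functionalSupport [T2Space X] {φ₁ φ₂ : C(X, ℝ) → ℝ}
    (hsep : ∀ f g : C(X, ℝ), f * g = 0 → φ₁ f * φ₂ g = 0) {x₁ x₂ : X}
    (hx₁ : x₁ ∈ functionalSupport φ₁) (hx₂ : x₂ ∈ functionalSupport φ₂) : x₁ = x₂ := by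
  by_contra hne
  obtain ⟨U₁, U₂, hU₁, hU₂, hxU₁, hxU₂, hdisj⟩ := t2_separation hne
  obtain ⟨f, hfU, hf⟩ := hx₁ U₁ (hU₁.mem_nhds hxU₁)
  obtain ⟨g, hgU, hg⟩ := hx₂ U₂ (hU₂.mem_nhds hxU₂)
  have hfg : f * g = 0 := by
    ext y
    by_contra hy
    obtain ⟨hfy, hgy⟩ := mul_ne_zero_iff.1 hy
    exact hdisj.ne_of_mem (hfU (subset_tsupport _ hfy)) (hgU (subset_tsupport _ hgy)) rfl
  exact mul_ne_zero hf hg (hsep f g hfg)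

section Additive

variable {F : Type*} [FunLike F C(X, ℝ) ℝ] [AddMonoidHomClass F C(X, ℝ) ℝ]

theorem map_eq_zero_of_disjoint_functionalSupport [T2Space X] [LocallyCompactSpace X] (φ : F)
    {f : C(X, ℝ)} (hf : HasCompactSupport f)
    (hdisj : Disjoint (tsupport f) (functionalSupport φ)) : φ f = 0 := by
  have hloc : ∀ y ∈ tsupport f, ∃ U ∈ 𝓝 y, ∀ g : C(X, ℝ), tsupport g ⊆ U → φ g = 0 :=
    fun y hy => notMem_functionalSupport.1 (hdisj.notMem_of_mem_left hy)
  choose! U hU hUφ using hloc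
  obtain ⟨t, htf, hcover⟩ := hf.elim_nhds_subcover (fun y => interior (U y))
    fun y hy => interior_mem_nhds.2 (hU y hy)
  obtain ⟨ρ, hρU, -⟩ := PartitionOfUnity.exists_isSubordinate_of_locallyFinite_t2space hf
    (fun i : t => interior (U i)) (fun _ => isOpen_interior) (locallyFinite_of_finite _)
    fun y hy => by
      obtain ⟨i, hi, hyi⟩ := mem_iUnion₂.1 (hcover hy)
      exact mem_iUnion.2 ⟨⟨i, hi⟩, hyi⟩
  have hsum : f = ∑ i, f * ρ i := by
    ext y
    simp only [ContinuousMap.sum_apply, ContinuousMap.mul_apply, ← Finset.mul_sum]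
    by_cases hy : y ∈ tsupport f
    · rw [← finsum_eq_sum_of_fintype, ρ.sum_eq_one hy, mul_one]
    · rw [image_eq_zero_of_notMem_tsupport hy, zero_mul]
  rw [hsum, map_sum]
  exact Finset.sum_eq_zero fun i _ => hUφ i (htf i i.2) _
    (tsupport_mul_subset_right.trans ((hρU i).trans interior_subset))

theorem functionalSupport_nonempty [CompactSpace X] [T2Space X] {φ : F}
    (hφ : ∃ f, φ f ≠ 0) : (functionalSupport φ).Nonempty := by
  obtain ⟨f, hf⟩ := hφ
  by_contra hempty
  refine hf (map_eq_zero_of_disjoint_functionalSupport φ (.of_compactSpace f) ?_)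
  rw [not_nonempty_iff_eq_empty.1 hempty]
  exact disjoint_empty _

end Additive

section CompactSpace

variable [CompactSpace X]

theorem ContinuousMap.exists_tsupport_subset_norm_sub_le (g : C(X, ℝ)) {ε : ℝ} (hε : 0 ≤ ε) :
    ∃ h : C(X, ℝ), tsupport h ⊆ {x | ε ≤ |g x|} ∧ ‖g - h‖ ≤ ε := by
  set c : C(X, ℝ) := g ⊓ const X ε ⊔ const X (-ε)
  refine ⟨g - c, closure_minimal (fun x hx => ?_) ?_, ?_⟩
  · rw [mem_ofPred_eq]
    by_contra! hlt
    obtain ⟨h₁, h₂⟩ := abs_lt.1 hlt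
    simp [c, min_eq_left h₂.le, max_eq_left h₁.le] at hx
  · exact isClosed_le continuous_const (by fun_prop)
  · rw [sub_sub_cancel, ContinuousMap.norm_le _ hε]
    intro x
    simp only [c, Real.norm_eq_abs, ContinuousMap.sup_apply, ContinuousMap.inf_apply,
      ContinuousMap.const_apply, abs_le]
    exact ⟨le_max_right _ _, max_le (min_le_right _ _) (by linarith)⟩

variable [T2Space X]

theorem ContinuousLinearMap.map_eq_zero_of_functionalSupport_subset {φ : C(X, ℝ) →L[ℝ] ℝ}
    {x : X} (hφ : functionalSupport φ ⊆ {x}) {g : C(X, ℝ)} (hg : g x = 0) : φ g = 0 := by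
  suffices g ∈ closure {h : C(X, ℝ) | φ h = 0} from
    (isClosed_eq φ.continuous continuous_const).closure_subset this
  refine Metric.mem_closure_iff.2 fun ε hε => ?_
  obtain ⟨h, hsupp, hdist⟩ := g.exists_tsupport_subset_norm_sub_le (half_pos hε).le
  refine ⟨h, map_eq_zero_of_disjoint_functionalSupport φ (.of_compactSpace h) ?_, ?_⟩
  · refine disjoint_of_subset_left hsupp (disjoint_of_subset_right hφ ?_)
    simpa [hg] using half_pos hε
  · rw [dist_eq_norm]
    linarith

theorem ContinuousLinearMap.eq_mul_eval_of_functionalSupport_subset {φ : C(X, ℝ) →L[ℝ] ℝ}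
    {x : X} (hφ : functionalSupport φ ⊆ {x}) (f : C(X, ℝ)) : φ f = φ 1 * f x := by
  have hker := φ.map_eq_zero_of_functionalSupport_subset hφ (g := f - f x • 1) (by simp)
  rw [map_sub, map_smul, smul_eq_mul, sub_eq_zero] at hker
  rw [hker, mul_comm]

end CompactSpace

end FunctionalSupport

theorem jointly_separating_functionals_eval
    {X : Type*} [TopologicalSpace X] [CompactSpace X] [T2Space X]
    (φ₁ φ₂ : C(X, ℝ) →L[ℝ] ℝ) (h₁ : φ₁ ≠ 0) (h₂ : φ₂ ≠ 0)
    (hsep : ∀ f g : C(X, ℝ), f * g = 0 → φ₁ f * φ₂ g = 0) :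
    ∃ x : X, (∀ f : C(X, ℝ), φ₁ f = φ₁ 1 * f x) ∧
      (∀ f : C(X, ℝ), φ₂ f = φ₂ 1 * f x) := by
  obtain ⟨x, hx⟩ := functionalSupport_nonempty (φ := φ₁) (by simpa using DFunLike.ne_iff.1 h₁)
  obtain ⟨y, hy⟩ := functionalSupport_nonempty (φ := φ₂) (by simpa using DFunLike.ne_iff.1 h₂)
  have hxy := eq_of_mem_functionalSupport hsep hx hy
  have hsupp₁ : functionalSupport φ₁ ⊆ {x} := fun z hz =>
    (eq_of_mem_functionalSupport hsep hz hy).trans hxy.symm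
  have hsupp₂ : functionalSupport φ₂ ⊆ {x} := fun z hz =>
    (eq_of_mem_functionalSupport hsep hx hz).symm
  exact ⟨x, φ₁.eq_mul_eval_of_functionalSupport_subset hsupp₁,
    φ₂.eq_mul_eval_of_functionalSupport_subset hsupp₂⟩
end

section
/- Let K be a compact Hausdorff space and φ : C(K, ℂ) → ℂ a nonzero ring homomorphism (additive and multiplicative) that is continuous with respect to the supremum norm. Then there exists a point t ∈ K such that either φ(f) = f(t) for all f, or φ(f) = conj(f(t)) for all f ∈ C(K, ℂ). -/
open WeakDual WeakDual.CharacterSpace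

lemma aux_eval_point {K : Type*} [TopologicalSpace K] [CompactSpace K] [T2Space K]
    (ψ : C(K, ℂ) → ℂ)
    (hadd : ∀ f g : C(K, ℂ), ψ (f + g) = ψ f + ψ g)
    (hmul : ∀ f g : C(K, ℂ), ψ (f * g) = ψ f * ψ g)
    (hone : ψ 1 = 1) (hcont : Continuous ψ)
    (hsmul : ∀ (c : ℂ) (f : C(K, ℂ)), ψ (c • f) = c * ψ f) :
    ∃ t : K, ∀ f : C(K, ℂ), ψ f = f t := by
  let L : C(K, ℂ) →L[ℂ] ℂ :=
    { toFun := ψ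
      map_add' := hadd
      map_smul' := hsmul
      cont := hcont }
  have hLne : (L : WeakDual ℂ C(K, ℂ)) ≠ 0 := by
    intro h
    have : ψ 1 = 0 := congrFun (congrArg DFunLike.coe h) 1
    rw [hone] at this
    exact one_ne_zero this
  let χ : characterSpace ℂ C(K, ℂ) := ⟨L, hLne, hmul⟩
  refine ⟨(homeoEval K ℂ).symm χ, fun f => ?_⟩
  have h1 : homeoEval K ℂ ((homeoEval K ℂ).symm χ) = χ := (homeoEval K ℂ).apply_symm_apply χ
  have h2 : (homeoEval K ℂ ((homeoEval K ℂ).symm χ)) f = χ f := by rw [h1]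
  have h3 : (homeoEval K ℂ ((homeoEval K ℂ).symm χ)) f = f ((homeoEval K ℂ).symm χ) :=
    continuousMapEval_apply_apply K ℂ _ f
  exact (h3 ▸ h2).symm

theorem continuous_ringHom_on_CK_is_eval_or_conj_eval
    {K : Type*} [TopologicalSpace K] [CompactSpace K] [T2Space K]
    (φ : C(K, ℂ) → ℂ)
    (hadd : ∀ f g : C(K, ℂ), φ (f + g) = φ f + φ g)
    (hmul : ∀ f g : C(K, ℂ), φ (f * g) = φ f * φ g)
    (hne : φ ≠ 0) (hcont : Continuous φ) :
    ∃ t : K, (∀ f : C(K, ℂ), φ f = f t) ∨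
      (∀ f : C(K, ℂ), φ f = starRingEnd ℂ (f t)) := by
  have hzero : φ 0 = 0 := by
    have h : φ 0 + φ 0 = φ 0 := by simpa using (hadd 0 0).symm
    exact add_eq_left.mp h
  have hone : φ 1 = 1 := by
    have h1 : φ 1 = φ 1 * φ 1 := by simpa using hmul 1 1
    by_contra hφ1
    have h0 : φ 1 = 0 := by
      rcases mul_eq_zero.mp (by linear_combination -h1 : φ 1 * (φ 1 - 1) = 0) with h | h
      · exact h
      · exact absurd (by linear_combination h) hφ1
    apply hne
    funext f
    have := hmul f 1
    rw [mul_one, h0, mul_zero] at this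
    simpa using this
  -- the ring hom on constants
  let Φ : C(K, ℂ) →+* ℂ :=
    { toFun := φ, map_one' := hone, map_mul' := hmul, map_zero' := hzero, map_add' := hadd }
  let ρ : ℂ →+* ℂ := Φ.comp (algebraMap ℂ C(K, ℂ))
  have hρcont : Continuous ρ := by
    have : Continuous (algebraMap ℂ C(K, ℂ)) := by
      have h := ContinuousMap.continuous_const' (X := K) (Y := ℂ)
      convert h using 1
      ext c t
      simp
    exact hcont.comp this
  rcases Complex.ringHom_eq_id_or_conj_of_continuous hρcont with hid | hconj
  · -- φ is ℂ-linear
    have hsmul : ∀ (c : ℂ) (f : C(K, ℂ)), φ (c • f) = c * φ f := by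
      intro c f
      rw [Algebra.smul_def, hmul]
      have : ρ c = c := by rw [hid]; rfl
      have hc : φ (algebraMap ℂ C(K, ℂ) c) = c := this
      rw [hc]
    obtain ⟨t, ht⟩ := aux_eval_point φ hadd hmul hone hcont hsmul
    exact ⟨t, Or.inl ht⟩
  · -- conj ∘ φ is ℂ-linear
    set ψ : C(K, ℂ) → ℂ := fun f => starRingEnd ℂ (φ f) with hψ
    have hadd' : ∀ f g, ψ (f + g) = ψ f + ψ g := fun f g => by
      simp [hψ, hadd, map_add]
    have hmul' : ∀ f g, ψ (f * g) = ψ f * ψ g := fun f g => by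
      simp [hψ, hmul, map_mul]
    have hone' : ψ 1 = 1 := by simp [hψ, hone]
    have hcont' : Continuous ψ := Complex.continuous_conj.comp hcont
    have hsmul' : ∀ (c : ℂ) (f : C(K, ℂ)), ψ (c • f) = c * ψ f := by
      intro c f
      have hc : φ (algebraMap ℂ C(K, ℂ) c) = starRingEnd ℂ c := by
        have : ρ c = starRingEnd ℂ c := by rw [hconj]
        exact this
      simp only [hψ, Algebra.smul_def, hmul, hc, map_mul, RingHomCompTriple.comp_apply]
      simp
    obtain ⟨t, ht⟩ := aux_eval_point ψ hadd' hmul' hone' hcont' hsmul'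
    refine ⟨t, Or.inr fun f => ?_⟩
    have := ht f
    simp only [hψ] at this
    calc φ f = starRingEnd ℂ (starRingEnd ℂ (φ f)) := by simp
    _ = starRingEnd ℂ (f t) := by rw [this]
end
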